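/- Let n ≥ 1, μ ∈ (0,1], x ∈ [0,1]^n and let f : 2^{[n]} → ℝ be any set function. The one-point gradient estimator ĝ built from x, f and exploration probability μ is unbiased: for every i ∈ [n], E[ĝ_{π(i)}] = f(A_i) − f(A_{i−1}) = g(x;f)_{π(i)}; that is, E[ĝ] = g(x;f). -/

import Mathlib

open Finset

/-- The chain set `A_i = {π(0), …, π(i-1)}` determined by a permutation `π` of `Fin n`
(0-indexed version of `{π(1), …, π(i)}`). -/
def chainSet {n : ℕ} (π : Equiv.Perm (Fin n)) (i : ℕ) : Finset (Fin n) :=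
  Finset.univ.filter fun j => (π.symm j : ℕ) < i

/-- Extended sorted coordinates: `extCoord x π 0 = 1`, `extCoord x π i = x (π (i-1))`
for `1 ≤ i ≤ n`, and `extCoord x π i = 0` for `i > n`. -/
def extCoord {n : ℕ} (x : Fin n → ℝ) (π : Equiv.Perm (Fin n)) (i : ℕ) : ℝ :=
  if h : 1 ≤ i ∧ i ≤ n then x (π ⟨i - 1, by omega⟩) else if i = 0 then 1 else 0

/-- The weight `λ_i = x_{π(i)} - x_{π(i+1)}` (with the conventions `x_{π(0)} = 1`,
`x_{π(n+1)} = 0`). -/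
def chainWeight {n : ℕ} (x : Fin n → ℝ) (π : Equiv.Perm (Fin n)) (i : ℕ) : ℝ :=
  extCoord x π i - extCoord x π (i + 1)

/-- The Lovász-extension formula `∑_{i=0}^n λ_i f(A_i)` evaluated with permutation `π`. -/
def lovasz {n : ℕ} (f : Finset (Fin n) → ℝ) (x : Fin n → ℝ) (π : Equiv.Perm (Fin n)) : ℝ :=
  ∑ i ∈ Finset.range (n + 1), chainWeight x π i * f (chainSet π i)

/-- `π` sorts the coordinates of `x` in nonincreasing order. -/
def isSorting {n : ℕ} (x : Fin n → ℝ) (π : Equiv.Perm (Fin n)) : Prop :=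
  ∀ i j : Fin n, i ≤ j → x (π j) ≤ x (π i)

/-- The chain gradient `g(x; f)`, defined by `g_{π(i)} = f(A_i) - f(A_{i-1})`. -/
def chainGrad {n : ℕ} (f : Finset (Fin n) → ℝ) (π : Equiv.Perm (Fin n)) : Fin n → ℝ :=
  fun j => f (chainSet π ((π.symm j : ℕ) + 1)) - f (chainSet π (π.symm j : ℕ))

/-- Membership in the unit hypercube `[0,1]^n`. -/
def inCube {n : ℕ} (x : Fin n → ℝ) : Prop := ∀ i, 0 ≤ x i ∧ x i ≤ 1

/-- The sampling probability `p_i = (1-μ) λ_i + μ/(n+1)` of the exploration mixture. -/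
noncomputable def probIdx {n : ℕ} (x : Fin n → ℝ) (π : Equiv.Perm (Fin n)) (μ : ℝ) (i : ℕ) : ℝ :=
  (1 - μ) * chainWeight x π i + μ / ((n : ℝ) + 1)

/-- `f̂_i = 1{I = i} · f(A_I) / p_i`, as a function of the sampled index `I`. -/
noncomputable def fhat {n : ℕ} (x : Fin n → ℝ) (π : Equiv.Perm (Fin n)) (μ : ℝ)
    (f : Finset (Fin n) → ℝ) (I i : ℕ) : ℝ :=
  if I = i then f (chainSet π I) / probIdx x π μ i else 0

/-- The one-point gradient estimator `ĝ`, with `ĝ_{π(i)} = f̂_i - f̂_{i-1}`, as a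
function of the sampled index `I`. -/
noncomputable def ghat {n : ℕ} (x : Fin n → ℝ) (π : Equiv.Perm (Fin n)) (μ : ℝ)
    (f : Finset (Fin n) → ℝ) (I : ℕ) : Fin n → ℝ :=
  fun j => fhat x π μ f I ((π.symm j : ℕ) + 1) - fhat x π μ f I (π.symm j : ℕ)

lemma chainWeight_nonneg {n : ℕ} (x : Fin n → ℝ) (hx : inCube x)
    (π : Equiv.Perm (Fin n)) (hπ : isSorting x π) (i : ℕ) :
    0 ≤ chainWeight x π i := by
  unfold chainWeight extCoord
  rcases Nat.lt_or_ge i 1 with h | h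
  · interval_cases i
    rcases Nat.eq_zero_or_pos n with hn | hn
    · simp [hn]
    · rw [dif_neg (by omega), dif_pos ⟨le_refl 1, hn⟩, if_pos rfl]
      have := (hx (π ⟨0, by omega⟩)).2; linarith
  rcases Nat.lt_or_ge i n with h2 | h2
  · rw [dif_pos ⟨h, by omega⟩, dif_pos ⟨by omega, by omega⟩]
    have := hπ ⟨i - 1, by omega⟩ ⟨i + 1 - 1, by omega⟩ (by simp only [Fin.le_def]; omega)
    linarith
  rcases Nat.eq_or_lt_of_le h2 with h3 | h3
  · rw [dif_pos ⟨h, by omega⟩, dif_neg (by omega), if_neg (by omega)]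
    have := (hx (π ⟨i - 1, by omega⟩)).1; linarith
  · rw [dif_neg (by omega), dif_neg (by omega), if_neg (by omega), if_neg (by omega)]
    norm_num

lemma probIdx_pos {n : ℕ} (x : Fin n → ℝ) (hx : inCube x)
    (π : Equiv.Perm (Fin n)) (hπ : isSorting x π) (μ : ℝ) (hμ : 0 < μ ∧ μ ≤ 1) (i : ℕ) :
    0 < probIdx x π μ i := by
  have h1 := chainWeight_nonneg x hx π hπ i
  have h2 : (0:ℝ) < μ / ((n:ℝ) + 1) := by
    apply div_pos hμ.1; positivity
  have : 0 ≤ (1 - μ) * chainWeight x π i := by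
    apply mul_nonneg (by linarith [hμ.2]) h1
  unfold probIdx; linarith

lemma sum_fhat {n : ℕ} (x : Fin n → ℝ) (hx : inCube x)
    (π : Equiv.Perm (Fin n)) (hπ : isSorting x π) (μ : ℝ) (hμ : 0 < μ ∧ μ ≤ 1)
    (f : Finset (Fin n) → ℝ) (i : ℕ) (hi : i ∈ Finset.range (n + 1)) :
    ∑ I ∈ Finset.range (n + 1), probIdx x π μ I * fhat x π μ f I i
      = f (chainSet π i) := by
  rw [Finset.sum_eq_single i]
  · unfold fhat
    rw [if_pos rfl]
    field_simp [(probIdx_pos x hx π hπ μ hμ i).ne']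
  · intro b _ hb
    unfold fhat
    simp [hb]
  · intro h; exact absurd hi h

/-- the one-point gradient estimator is unbiased:
`E[ĝ_{π(i)}] = f(A_i) - f(A_{i-1}) = g(x;f)_{π(i)}`, i.e. `E[ĝ] = g(x;f)`.
(The expectation over the sampled index `I` is written as the explicit finite sum
weighted by the sampling probabilities.) -/
theorem ghat_unbiased (n : ℕ) (hn : 1 ≤ n) (μ : ℝ) (hμ : 0 < μ ∧ μ ≤ 1)
    (x : Fin n → ℝ) (hx : inCube x) (π : Equiv.Perm (Fin n)) (hπ : isSorting x π)
    (f : Finset (Fin n) → ℝ) :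
    ∀ j : Fin n,
      ∑ I ∈ Finset.range (n + 1), probIdx x π μ I * ghat x π μ f I j
        = chainGrad f π j := by
  intro j
  have hk : (π.symm j : ℕ) < n := (π.symm j).isLt
  unfold ghat chainGrad
  simp only [mul_sub]
  rw [Finset.sum_sub_distrib,
    sum_fhat x hx π hπ μ hμ f _ (Finset.mem_range.mpr (by omega)),
    sum_fhat x hx π hπ μ hμ f _ (Finset.mem_range.mpr (by omega))]
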